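/- There exists a cubic graph of order 16 whose coalition number equals 9. -/

import Mathlib

/-- `S` dominates the vertex `v`: `v ∈ S` or some vertex of `S` is adjacent to `v`. -/
def SimpleGraph.DominatesVert {V : Type*} (G : SimpleGraph V) (S : Finset V) (v : V) : Prop :=
  v ∈ S ∨ ∃ u ∈ S, G.Adj u v

/-- `S` is a dominating set of `G`. -/
def SimpleGraph.IsDominatingSet {V : Type*} (G : SimpleGraph V) (S : Finset V) : Prop :=
  ∀ v, G.DominatesVert S v

/-- A coalition partition of `G`: a partition of the vertex set into nonempty parts,
each of which is either a dominating singleton, or a non-dominating set forming a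
coalition (dominating union) with another non-dominating part. -/
def SimpleGraph.IsCoalitionPartition {V : Type*} [Fintype V] [DecidableEq V]
    (G : SimpleGraph V) (P : Finset (Finset V)) : Prop :=
  (∀ A ∈ P, A.Nonempty) ∧
  (∀ A ∈ P, ∀ B ∈ P, A ≠ B → Disjoint A B) ∧
  (∀ v : V, ∃ A ∈ P, v ∈ A) ∧
  ∀ A ∈ P,
    (∃ v, A = {v} ∧ G.IsDominatingSet A) ∨
    (¬ G.IsDominatingSet A ∧
      ∃ B ∈ P, B ≠ A ∧ ¬ G.IsDominatingSet B ∧ G.IsDominatingSet (A ∪ B))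

/-- The coalition number of `G`: the maximum number of parts in a coalition partition. -/
noncomputable def SimpleGraph.coalitionNumber {V : Type*} [Fintype V] [DecidableEq V]
    (G : SimpleGraph V) : ℕ :=
  sSup {k | ∃ P : Finset (Finset V), G.IsCoalitionPartition P ∧ P.card = k}

/-!
In a cubic graph on 16 vertices every closed neighbourhood has 4 vertices, so a dominating set has
at least 4 vertices. Hence no part of a coalition partition dominates, and a singleton part `{x}`
needs a partner `B` with `|B| ≥ 3`. For `|B| = 3` the dominating set `{x} ∪ B` is a perfect code,
so `N[x]` is the complement of `N[B]`; as no three vertices share a closed neighbourhood, `B` has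
at most two singleton partners. In general the singleton partners of `B` lie in `N[w]` for any `w`
not dominated by `B`, so there are at most four. If some `B` has four, they fill `N[w]`, every
other part misses `N[w]`, so all singleton parts lie in `N[w]`, and `2 ≤ |A| + [|A| = 1]` (with
slack 2 at `B`) summed over the parts gives at most 9 parts. Otherwise
`5 + 2·#partners(A) ≤ 3|A| + 2[|A| = 1]` for every part `A`, and summing gives `5·#parts ≤ 48`.
-/

open Finset

namespace SimpleGraph

variable {V : Type*} [Fintype V] [DecidableEq V] {G : SimpleGraph V} {P : Finset (Finset V)}

lemma IsCoalitionPartition.sum_card (hP : G.IsCoalitionPartition P) :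
    ∑ A ∈ P, #A = Fintype.card V := by
  obtain ⟨-, hdisj, hcov, -⟩ := hP
  have hunion : P.biUnion (fun A => A) = univ :=
    eq_univ_of_forall fun v => mem_biUnion.mpr (hcov v)
  rw [← card_univ, ← hunion, card_biUnion fun A hA B hB => hdisj A hA B hB]

lemma coalitionNumber_eq_card (hP : G.IsCoalitionPartition P)
    (hmax : ∀ Q, G.IsCoalitionPartition Q → #Q ≤ #P) : G.coalitionNumber = #P :=
  IsGreatest.csSup_eq ⟨⟨P, hP, rfl⟩, by rintro _ ⟨Q, hQ, rfl⟩; exact hmax Q hQ⟩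

variable [DecidableRel G.Adj]

instance (S : Finset V) (v : V) : Decidable (G.DominatesVert S v) :=
  inferInstanceAs (Decidable (v ∈ S ∨ ∃ u ∈ S, G.Adj u v))

instance : DecidablePred G.IsDominatingSet :=
  fun _ => inferInstanceAs (Decidable (∀ _, _))

variable (G) in
def closedNbhd (v : V) : Finset V := insert v (G.neighborFinset v)

variable (G) in
def singletonPartners (P : Finset (Finset V)) (B : Finset V) : Finset (Finset V) :=
  {A ∈ P | #A = 1 ∧ G.IsDominatingSet (A ∪ B)}

variable {d : ℕ} {S B : Finset V}

@[simp]
lemma mem_closedNbhd {u v : V} : u ∈ G.closedNbhd v ↔ u = v ∨ G.Adj v u := by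
  simp [closedNbhd]

lemma mem_closedNbhd_comm {u v : V} : u ∈ G.closedNbhd v ↔ v ∈ G.closedNbhd u := by
  simp only [mem_closedNbhd, eq_comm, G.adj_comm]

lemma dominatesVert_iff {v : V} : G.DominatesVert S v ↔ ∃ u ∈ S, v ∈ G.closedNbhd u := by
  simp only [DominatesVert, mem_closedNbhd]
  constructor
  · rintro (hv | ⟨u, hu, huv⟩)
    exacts [⟨v, hv, .inl rfl⟩, ⟨u, hu, .inr huv⟩]
  · rintro ⟨u, hu, rfl | huv⟩
    exacts [.inl hu, .inr ⟨u, hu, huv⟩]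

lemma dominatesVert_iff_mem_biUnion {v : V} :
    G.DominatesVert S v ↔ v ∈ S.biUnion G.closedNbhd := by
  rw [dominatesVert_iff, mem_biUnion]

lemma IsRegularOfDegree.card_closedNbhd (hG : G.IsRegularOfDegree d) (v : V) :
    #(G.closedNbhd v) = d + 1 := by
  rw [closedNbhd, card_insert_of_notMem (notMem_neighborFinset_self G v),
    card_neighborFinset_eq_degree, hG v]

lemma IsRegularOfDegree.card_biUnion_closedNbhd_le (hG : G.IsRegularOfDegree d) (S : Finset V) :
    #(S.biUnion G.closedNbhd) ≤ #S * (d + 1) :=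
  card_biUnion_le_card_mul _ _ _ fun v _ => (hG.card_closedNbhd v).le

lemma IsRegularOfDegree.card_le_of_isDominatingSet (hG : G.IsRegularOfDegree d)
    (hS : G.IsDominatingSet S) : Fintype.card V ≤ #S * (d + 1) := by
  have hcover : S.biUnion G.closedNbhd = univ :=
    eq_univ_of_forall fun v => dominatesVert_iff_mem_biUnion.mp (hS v)
  rw [← card_univ, ← hcover]
  exact hG.card_biUnion_closedNbhd_le S

lemma mem_closedNbhd_of_isDominatingSet_union {x v : V} (h : G.IsDominatingSet ({x} ∪ S))
    (hv : ¬ G.DominatesVert S v) : v ∈ G.closedNbhd x := by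
  obtain ⟨u, hu, hvu⟩ := dominatesVert_iff.mp (h v)
  rcases mem_union.mp hu with hx | hS
  · rwa [mem_singleton.mp hx] at hvu
  · exact absurd (dominatesVert_iff.mpr ⟨u, hS, hvu⟩) hv

lemma IsRegularOfDegree.closedNbhd_eq_compl (hG : G.IsRegularOfDegree d)
    (hV : Fintype.card V = (#S + 1) * (d + 1)) {x : V} (h : G.IsDominatingSet ({x} ∪ S)) :
    G.closedNbhd x = (S.biUnion G.closedNbhd)ᶜ := by
  have hsub : (S.biUnion G.closedNbhd)ᶜ ⊆ G.closedNbhd x := fun v hv =>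
    mem_closedNbhd_of_isDominatingSet_union h
      (dominatesVert_iff_mem_biUnion.not.mpr (mem_compl.mp hv))
  refine (eq_of_subset_of_card_le hsub ?_).symm
  have hS := hG.card_biUnion_closedNbhd_le S
  rw [card_compl, hG.card_closedNbhd, hV, add_one_mul]
  omega

lemma singletonPartners_subset_image_closedNbhd {w : V} (hw : ¬ G.DominatesVert B w) :
    G.singletonPartners P B ⊆ (G.closedNbhd w).image singleton := by
  intro A hA
  obtain ⟨-, hA1, hdom⟩ := mem_filter.mp hA
  obtain ⟨x, rfl⟩ := card_eq_one.mp hA1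
  exact mem_image_of_mem _
    (mem_closedNbhd_comm.mp (mem_closedNbhd_of_isDominatingSet_union hdom hw))

lemma IsRegularOfDegree.card_singletonPartners_le (hG : G.IsRegularOfDegree d)
    (hB : ¬ G.IsDominatingSet B) : #(G.singletonPartners P B) ≤ d + 1 := by
  obtain ⟨w, hw⟩ := not_forall.mp hB
  calc #(G.singletonPartners P B)
      ≤ #((G.closedNbhd w).image singleton) :=
        card_le_card (singletonPartners_subset_image_closedNbhd hw)
    _ ≤ d + 1 := card_image_le.trans (hG.card_closedNbhd w).le

lemma IsRegularOfDegree.singletonPartners_eq_empty (hG : G.IsRegularOfDegree d)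
    (hB : (#B + 1) * (d + 1) < Fintype.card V) : G.singletonPartners P B = ∅ := by
  refine eq_empty_of_forall_notMem fun A hA => ?_
  obtain ⟨-, hA1, hdom⟩ := mem_filter.mp hA
  have hcard : #(A ∪ B) ≤ #B + 1 := (card_union_le A B).trans (by omega)
  have := hG.card_le_of_isDominatingSet hdom
  have := Nat.mul_le_mul_right (d + 1) hcard
  omega

lemma IsRegularOfDegree.card_singletonPartners_le_of_perfect (hG : G.IsRegularOfDegree d)
    (hV : Fintype.card V = (#B + 1) * (d + 1)) {k : ℕ}
    (htwins : ∀ x, #{y | G.closedNbhd y = G.closedNbhd x} ≤ k) :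
    #(G.singletonPartners P B) ≤ k := by
  have hnbhd : ∀ A ∈ G.singletonPartners P B, ∃ x, A = {x} ∧
      G.closedNbhd x = (B.biUnion G.closedNbhd)ᶜ := by
    intro A hA
    obtain ⟨-, hA1, hdom⟩ := mem_filter.mp hA
    obtain ⟨x, rfl⟩ := card_eq_one.mp hA1
    exact ⟨x, rfl, hG.closedNbhd_eq_compl hV hdom⟩
  rcases (G.singletonPartners P B).eq_empty_or_nonempty with hempty | ⟨A₀, hA₀⟩
  · simp [hempty]
  obtain ⟨x₀, -, hx₀⟩ := hnbhd A₀ hA₀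
  calc #(G.singletonPartners P B)
      ≤ #(({y | G.closedNbhd y = G.closedNbhd x₀} : Finset V).image singleton) := by
        refine card_le_card fun A hA => ?_
        obtain ⟨x, rfl, hx⟩ := hnbhd A hA
        exact mem_image_of_mem _ (mem_filter.mpr ⟨mem_univ x, hx.trans hx₀.symm⟩)
    _ ≤ k := card_image_le.trans (htwins x₀)

lemma IsRegularOfDegree.singletonPartners_subset_of_card_eq (hG : G.IsRegularOfDegree d)
    (hdisj : ∀ A ∈ P, ∀ B ∈ P, A ≠ B → Disjoint A B) (hB : ¬ G.IsDominatingSet B)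
    (hsat : #(G.singletonPartners P B) = d + 1) {B' : Finset V} (hB' : B' ∈ P) (h1 : #B' ≠ 1) :
    G.singletonPartners P B' ⊆ G.singletonPartners P B := by
  obtain ⟨w, hw⟩ := not_forall.mp hB
  have hfill : G.singletonPartners P B = (G.closedNbhd w).image singleton :=
    eq_of_subset_of_card_le (singletonPartners_subset_image_closedNbhd hw) <| by
      rw [card_image_of_injective _ singleton_injective, hG.card_closedNbhd, hsat]
  have hw' : ¬ G.DominatesVert B' w := by
    rintro h
    obtain ⟨u, hu, hwu⟩ := dominatesVert_iff.mp h
    have hpart : {u} ∈ G.singletonPartners P B :=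
      hfill ▸ mem_image_of_mem _ (mem_closedNbhd_comm.mp hwu)
    have hne : {u} ≠ B' := fun h => h1 (h ▸ card_singleton u)
    exact Finset.disjoint_left.mp (hdisj _ (mem_filter.mp hpart).1 _ hB' hne)
      (mem_singleton_self u) hu
  exact hfill ▸ singletonPartners_subset_image_closedNbhd hw'

namespace IsCoalitionPartition

lemma not_isDominatingSet (hP : G.IsCoalitionPartition P) (hG : G.IsRegularOfDegree d)
    (hV : d + 1 < Fintype.card V) {A : Finset V} (hA : A ∈ P) : ¬ G.IsDominatingSet A := by
  intro hdom
  rcases hP.2.2.2 A hA with ⟨v, rfl, -⟩ | ⟨hnot, -⟩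
  · have := hG.card_le_of_isDominatingSet hdom
    rw [card_singleton, one_mul] at this
    omega
  · exact hnot hdom

lemma filter_card_eq_one_subset (hP : G.IsCoalitionPartition P)
    (hnodom : ∀ A ∈ P, ¬ G.IsDominatingSet A) :
    {A ∈ P | #A = 1} ⊆ P.biUnion (G.singletonPartners P) := by
  intro A hA
  obtain ⟨hAP, hA1⟩ := mem_filter.mp hA
  rcases hP.2.2.2 A hAP with ⟨v, rfl, hdom⟩ | ⟨-, B, hB, -, -, hdom⟩
  · exact absurd hdom (hnodom _ hAP)
  · exact mem_biUnion.mpr ⟨B, hB, mem_filter.mpr ⟨hAP, hA1, hdom⟩⟩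

lemma card_le_nine_of_card_singletonPartners_eq_four (hP : G.IsCoalitionPartition P)
    (hG : G.IsRegularOfDegree 3) (hV : Fintype.card V = 16)
    (htwins : ∀ x, #{y | G.closedNbhd y = G.closedNbhd x} ≤ 2) (hB : B ∈ P)
    (hB4 : #(G.singletonPartners P B) = 4) : #P ≤ 9 := by
  have hnodom : ∀ A ∈ P, ¬ G.IsDominatingSet A := fun A => hP.not_isDominatingSet hG (by omega)
  have hsmall : ∀ B', #B' ≤ 2 → G.singletonPartners P B' = ∅ := fun B' hB' =>
    hG.singletonPartners_eq_empty (by omega)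
  have hBcard : 4 ≤ #B := by
    by_contra!
    rcases Nat.lt_or_ge #B 3 with h | h
    · rw [hsmall B (by omega), card_empty] at hB4; omega
    · have := hG.card_singletonPartners_le_of_perfect (P := P) (B := B) (by omega) htwins; omega
  have hsub : {A ∈ P | #A = 1} ⊆ G.singletonPartners P B := by
    refine (hP.filter_card_eq_one_subset hnodom).trans (biUnion_subset.mpr fun B' hB' => ?_)
    by_cases h1 : #B' = 1
    · rw [hsmall B' (by omega)]; exact empty_subset _
    · exact hG.singletonPartners_subset_of_card_eq hP.2.1 (hnodom B hB) hB4 hB' h1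
  have hS1 := (card_le_card hsub).trans hB4.le
  have hweight : ∀ A ∈ P, 2 + (if A = B then 2 else 0) ≤ #A + (if #A = 1 then 1 else 0) := by
    intro A hA
    have := card_pos.mpr (hP.1 A hA)
    split_ifs with h <;> first | omega | (subst h; omega)
  have := sum_le_sum hweight
  rw [sum_add_distrib, sum_add_distrib, sum_ite_eq', if_pos hB, ← card_filter, hP.sum_card,
    hV] at this
  simp only [sum_const, smul_eq_mul] at this
  omega

lemma card_le_nine_of_card_singletonPartners_le_three (hP : G.IsCoalitionPartition P)
    (hG : G.IsRegularOfDegree 3) (hV : Fintype.card V = 16)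
    (htwins : ∀ x, #{y | G.closedNbhd y = G.closedNbhd x} ≤ 2)
    (hunsat : ∀ B ∈ P, #(G.singletonPartners P B) ≤ 3) : #P ≤ 9 := by
  have hnodom : ∀ A ∈ P, ¬ G.IsDominatingSet A := fun A => hP.not_isDominatingSet hG (by omega)
  have hS1 := (card_le_card (hP.filter_card_eq_one_subset hnodom)).trans card_biUnion_le
  have hweight : ∀ A ∈ P, 5 + 2 * #(G.singletonPartners P A) ≤
      3 * #A + 2 * (if #A = 1 then 1 else 0) := by
    intro A hA
    have := hunsat A hA
    have := card_pos.mpr (hP.1 A hA)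
    rcases Nat.lt_or_ge #A 3 with h | h
    · rw [hG.singletonPartners_eq_empty (by omega), card_empty]; split_ifs <;> omega
    · rcases h.eq_or_lt with h3 | h4
      · have := hG.card_singletonPartners_le_of_perfect (P := P) (B := A) (by omega) htwins
        split_ifs <;> omega
      · split_ifs <;> omega
  have := sum_le_sum hweight
  rw [sum_add_distrib, sum_add_distrib, ← mul_sum, ← mul_sum, ← mul_sum, ← card_filter,
    hP.sum_card, hV] at this
  simp only [sum_const, smul_eq_mul] at this
  omega

theorem card_le_nine (hP : G.IsCoalitionPartition P) (hG : G.IsRegularOfDegree 3)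
    (hV : Fintype.card V = 16) (htwins : ∀ x, #{y | G.closedNbhd y = G.closedNbhd x} ≤ 2) :
    #P ≤ 9 := by
  by_cases hsat : ∃ B ∈ P, #(G.singletonPartners P B) = 4
  · obtain ⟨B, hB, hB4⟩ := hsat
    exact hP.card_le_nine_of_card_singletonPartners_eq_four hG hV htwins hB hB4
  · push Not at hsat
    refine hP.card_le_nine_of_card_singletonPartners_le_three hG hV htwins fun B hB => ?_
    have := hG.card_singletonPartners_le (P := P) (hP.not_isDominatingSet hG (by omega) hB)
    have := hsat B hB
    omega

end IsCoalitionPartition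

end SimpleGraph

-- Three diamonds `K₄ - e` on `{0,1,2,3}`, `{4,5,6,7}`, `{10,11,12,14}`, whose degree-2
-- vertices are joined to the path `8 - 9 - 15 - 13`.
def cubic16Nbrs : Fin 16 → List (Fin 16) :=
  ![[1, 2, 3], [0, 2, 3], [0, 1, 13], [0, 1, 8], [5, 6, 7], [4, 6, 7], [4, 5, 13], [4, 5, 9],
    [3, 9, 14], [7, 8, 15], [11, 12, 15], [10, 12, 14], [10, 11, 14], [2, 6, 15], [8, 11, 12],
    [9, 10, 13]]

def cubic16 : SimpleGraph (Fin 16) where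
  Adj u v := v ∈ cubic16Nbrs u
  symm := ⟨fun u v => (by decide : ∀ u v : Fin 16, v ∈ cubic16Nbrs u → u ∈ cubic16Nbrs v) u v⟩
  loopless := ⟨fun v => (by decide : ∀ v : Fin 16, v ∉ cubic16Nbrs v) v⟩

instance : DecidableRel cubic16.Adj := fun u v => inferInstanceAs (Decidable (v ∈ cubic16Nbrs u))

lemma cubic16_isRegularOfDegree : cubic16.IsRegularOfDegree 3 := by
  show ∀ v, cubic16.degree v = 3
  decide

lemma cubic16_card_closedTwins_le :
    ∀ x, #{y | cubic16.closedNbhd y = cubic16.closedNbhd x} ≤ 2 := by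
  decide

-- Coalitions: `{0}`, `{1}` with `{6, 9, 11}`; `{4}`, `{5}` with `{2, 8, 10}`;
-- `{12}`, `{14, 15}` with `{3, 7, 13}`.
def cubic16Partition : Finset (Finset (Fin 16)) :=
  {{0}, {1}, {4}, {5}, {12}, {14, 15}, {6, 9, 11}, {2, 8, 10}, {3, 7, 13}}

lemma isCoalitionPartition_cubic16Partition : cubic16.IsCoalitionPartition cubic16Partition := by
  refine ⟨?_, ?_, by decide, fun A hA => .inr ?_⟩
  · simp only [cubic16Partition, mem_insert, mem_singleton, forall_eq_or_imp, forall_eq]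
    decide
  · simp only [cubic16Partition, mem_insert, mem_singleton, forall_eq_or_imp, forall_eq]
    and_intros <;> decide
  · simp only [cubic16Partition, mem_insert, mem_singleton] at hA
    rcases hA with rfl | rfl | rfl | rfl | rfl | rfl | rfl | rfl | rfl <;> decide

/-- There exists a cubic graph of order 16 whose coalition number equals 9. -/
theorem exists_cubic_order16_coalition_nine :
    ∃ G : SimpleGraph (Fin 16), ∃ _ : DecidableRel G.Adj, G.IsRegularOfDegree 3 ∧ G.coalitionNumber = 9 :=
  ⟨cubic16, inferInstance, cubic16_isRegularOfDegree,
    SimpleGraph.coalitionNumber_eq_card isCoalitionPartition_cubic16Partition fun _ hQ =>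
      hQ.card_le_nine cubic16_isRegularOfDegree (Fintype.card_fin 16) cubic16_card_closedTwins_le⟩
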